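/- Let G be a finite abelian group with smallest prime divisor p of |G|, and let S and T be sequences over G such that every term g of T satisfies g ∉ ⟨supp(S)⟩. If |T| ≤ p − 1, then |Σ₀(T·S)| ≥ (|T| + 1)·|Σ₀(S)|, where T·S denotes the concatenation (multiset sum) of T and S. -/

import Mathlib

/-- The set of sums over nonempty subsequences (sub-multisets) of the sequence `S`. -/
def seqSums {G : Type*} [AddCommGroup G] (S : Multiset G) : Set G :=
  {x | ∃ T : Multiset G, T ≤ S ∧ T ≠ 0 ∧ T.sum = x}

/-- `seqSums S` together with `0`. -/
def seqSums0 {G : Type*} [AddCommGroup G] (S : Multiset G) : Set G :=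
  seqSums S ∪ {0}

lemma mem_seqSums0_iff {G : Type*} [AddCommGroup G] {W : Multiset G} {x : G} :
    x ∈ seqSums0 W ↔ ∃ U : Multiset G, U ≤ W ∧ U.sum = x := by
  constructor
  · rintro (⟨U, hU, _, rfl⟩ | h)
    · exact ⟨U, hU, rfl⟩
    · rcases h with rfl
      exact ⟨0, Multiset.zero_le _, rfl⟩
  · rintro ⟨U, hU, rfl⟩
    rcases eq_or_ne U 0 with rfl | h
    · right; rfl
    · left; exact ⟨U, hU, h, rfl⟩

lemma zero_mem_seqSums0 {G : Type*} [AddCommGroup G] (W : Multiset G) :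
    (0 : G) ∈ seqSums0 W := Or.inr rfl

lemma seqSums0_mono {G : Type*} [AddCommGroup G] {W W' : Multiset G} (h : W ≤ W') :
    seqSums0 W ⊆ seqSums0 W' := by
  intro x hx
  rw [mem_seqSums0_iff] at hx ⊢
  obtain ⟨U, hU, rfl⟩ := hx
  exact ⟨U, le_trans hU h, rfl⟩

lemma add_mem_seqSums0 {G : Type*} [AddCommGroup G] {T S : Multiset G} {a b : G}
    (ha : a ∈ seqSums0 T) (hb : b ∈ seqSums0 S) : a + b ∈ seqSums0 (T + S) := by
  rw [mem_seqSums0_iff] at ha hb ⊢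
  obtain ⟨U, hU, rfl⟩ := ha
  obtain ⟨V, hV, rfl⟩ := hb
  exact ⟨U + V, add_le_add hU hV, (Multiset.sum_add U V)⟩

lemma key_quotient_lemma {G : Type*} [AddCommGroup G] [Finite G] (H : AddSubgroup G) (p : ℕ)
    (T : Multiset G)
    (hord : ∀ g ∈ T, p ≤ addOrderOf ((QuotientAddGroup.mk' H) g))
    (hlen : Multiset.card T + 1 ≤ p) :
    Multiset.card T + 1 ≤ Nat.card ((QuotientAddGroup.mk' H) '' seqSums0 T) := by
  induction T using Multiset.induction with
  | empty =>
    have h0 : (0 : G ⧸ H) ∈ (QuotientAddGroup.mk' H) '' seqSums0 (0 : Multiset G) :=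
      ⟨0, zero_mem_seqSums0 _, map_zero _⟩
    have : ((QuotientAddGroup.mk' H) '' seqSums0 (0 : Multiset G)).Nonempty := ⟨0, h0⟩
    have := this.to_subtype
    rw [Multiset.card_zero]
    exact Nat.card_pos (α := ((QuotientAddGroup.mk' H) '' seqSums0 (0 : Multiset G)))
  | cons a T' ih =>
    set π := QuotientAddGroup.mk' H with hπ
    set A' : Set (G ⧸ H) := π '' seqSums0 T' with hA'
    set A : Set (G ⧸ H) := π '' seqSums0 (a ::ₘ T') with hA
    have hA'A : A' ⊆ A := Set.image_mono (seqSums0_mono (Multiset.le_cons_self _ _))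
    have htrans : (fun x => π a + x) '' A' ⊆ A := by
      rintro _ ⟨_, ⟨y, hy, rfl⟩, rfl⟩
      exact ⟨a + y, by
        rw [mem_seqSums0_iff] at hy ⊢
        obtain ⟨U, hU, rfl⟩ := hy
        exact ⟨a ::ₘ U, Multiset.cons_le_cons _ hU, Multiset.sum_cons a U⟩, map_add π a y⟩
    have ihA' : Multiset.card T' + 1 ≤ Nat.card A' := by
      apply ih (fun g hg => hord g (Multiset.mem_cons_of_mem hg))
      simp only [Multiset.card_cons] at hlen; omega
    have hordA : p ≤ addOrderOf (π a) := hord a (Multiset.mem_cons_self a T')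
    rw [Nat.card_coe_set_eq] at *
    simp only [Multiset.card_cons]
    by_cases hc : (fun x => π a + x) '' A' = A'
    · -- all multiples of π a lie in A'
      have hmul : ∀ n : ℕ, n • (π a) ∈ A' := by
        intro n
        induction n with
        | zero => exact ⟨0, zero_mem_seqSums0 _, by simp⟩
        | succ n ihn =>
          have : π a + n • π a ∈ (fun x => π a + x) '' A' := ⟨_, ihn, rfl⟩
          rw [hc] at this
          simpa [succ_nsmul, add_comm] using this
      have hinj : Function.Injective (fun k : Fin (addOrderOf (π a)) => (⟨(k : ℕ) • (π a), hmul k⟩ : A')) := by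
        intro i j hij
        simp only [Subtype.mk.injEq] at hij
        exact Fin.ext (nsmul_injOn_Iio_addOrderOf i.2 j.2 hij)
      have := Nat.card_le_card_of_injective _ hinj
      simp only [Nat.card_eq_fintype_card, Fintype.card_fin, Nat.card_coe_set_eq] at this
      have hle : A'.ncard ≤ A.ncard := Set.ncard_le_ncard hA'A (Set.toFinite _)
      have hccons : Multiset.card (a ::ₘ T') = Multiset.card T' + 1 := Multiset.card_cons a T'
      omega
    · have hnsub : ¬ ((fun x => π a + x) '' A' ⊆ A') := by
        intro hsub
        exact hc (Set.eq_of_subset_of_ncard_le hsub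
          (le_of_eq (Set.ncard_image_of_injective A' (add_right_injective (π a))).symm)
          (Set.toFinite _))
      obtain ⟨y, hy1, hy2⟩ := Set.not_subset.mp hnsub
      have hins : insert y A' ⊆ A := Set.insert_subset (htrans hy1) hA'A
      have := Set.ncard_le_ncard hins (Set.toFinite _)
      rw [Set.ncard_insert_of_notMem hy2 (Set.toFinite _)] at this
      omega

open Classical in
/-- A sequence `S` over `G` is regular if for every proper subgroup `H ⊊ G`,
at most `|H| - 1` terms of `S` (counted with multiplicity) lie in `H`. -/
def IsRegularSeq {G : Type*} [AddCommGroup G] (S : Multiset G) : Prop :=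
  ∀ H : AddSubgroup G, H ≠ ⊤ →
    Multiset.card (S.filter (fun g => g ∈ H)) ≤ Nat.card H - 1

/-- The Davenport constant: the smallest `t` such that every sequence over `G` of length
at least `t` contains a nonempty zero-sum subsequence. -/
noncomputable def davenport (G : Type*) [AddCommGroup G] : ℕ :=
  sInf {t : ℕ | ∀ S : Multiset G, t ≤ Multiset.card S →
    ∃ T : Multiset G, T ≤ S ∧ T ≠ 0 ∧ T.sum = 0}

/-- The set of sums over nonempty subsets of the finite set `S`. -/
def setSums {G : Type*} [AddCommGroup G] (S : Finset G) : Set G :=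
  {x | ∃ T : Finset G, T ⊆ S ∧ T.Nonempty ∧ (∑ g ∈ T, g) = x}

/-- `setSums S` together with `0`. -/
def setSums0 {G : Type*} [AddCommGroup G] (S : Finset G) : Set G :=
  setSums S ∪ {0}

/-- Let `S, T` be sequences over `G` such that no term of `T` lies in
`⟨supp S⟩`. If `|T| ≤ p - 1`, where `p` is the smallest prime divisor of `|G|`, then
`|Σ₀(T ⬝ S)| ≥ (|T| + 1) ⬝ |Σ₀(S)|`. -/
theorem coset_sums_short (G : Type*) [AddCommGroup G] [Finite G]
    (h1 : 1 < Nat.card G) (p : ℕ) (hp : p = (Nat.card G).minFac)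
    (S T : Multiset G)
    (hT : ∀ g ∈ T, g ∉ AddSubgroup.closure {x : G | x ∈ S})
    (hlen : Multiset.card T ≤ p - 1) :
    (Multiset.card T + 1) * Nat.card (seqSums0 S) ≤ Nat.card (seqSums0 (T + S)) := by
  classical
  set H := AddSubgroup.closure {x : G | x ∈ S} with hH
  set π := QuotientAddGroup.mk' H with hπ
  have hp2 : 2 ≤ p := hp ▸ (Nat.minFac_prime (by omega)).two_le
  have hlen' : Multiset.card T + 1 ≤ p := by omega
  -- every element of seqSums0 S lies in H
  have hB : ∀ b ∈ seqSums0 S, b ∈ H := by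
    intro b hb
    rw [mem_seqSums0_iff] at hb
    obtain ⟨U, hU, rfl⟩ := hb
    exact AddSubgroup.multiset_sum_mem H U fun x hx =>
      AddSubgroup.subset_closure (Multiset.mem_of_le hU hx)
  -- orders in the quotient
  have hord : ∀ g ∈ T, p ≤ addOrderOf (π g) := by
    intro g hg
    have hne : π g ≠ 0 := by
      rw [hπ, QuotientAddGroup.mk'_apply, ne_eq, QuotientAddGroup.eq_zero_iff]
      exact hT g hg
    have hone : addOrderOf (π g) ≠ 1 := by
      rwa [ne_eq, AddMonoid.addOrderOf_eq_one_iff]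
    have hdvd1 : addOrderOf (π g) ∣ Nat.card (G ⧸ H) := addOrderOf_dvd_natCard _
    have hdvd2 : Nat.card (G ⧸ H) ∣ Nat.card G :=
      Dvd.intro _ (AddSubgroup.card_eq_card_quotient_mul_card_addSubgroup H).symm
    have hdvd : addOrderOf (π g) ∣ Nat.card G := hdvd1.trans hdvd2
    have hpos : 0 < addOrderOf (π g) := addOrderOf_pos _
    have h2o : 2 ≤ addOrderOf (π g) := by omega
    calc p = (Nat.card G).minFac := hp
      _ ≤ (addOrderOf (π g)).minFac :=
        Nat.minFac_le_of_dvd (Nat.minFac_prime hone).two_le ((Nat.minFac_dvd _).trans hdvd)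
      _ ≤ addOrderOf (π g) := Nat.minFac_le hpos
  have hkey := key_quotient_lemma H p T hord hlen'
  -- build an injection (π '' seqSums0 T) × (seqSums0 S) ↪ seqSums0 (T + S)
  set A : Set (G ⧸ H) := π '' seqSums0 T with hA
  have hsec : ∀ c : A, ∃ x, x ∈ seqSums0 T ∧ π x = (c : G ⧸ H) := fun c => c.2
  choose sec hsec1 hsec2 using hsec
  let f : A × (seqSums0 S) → (seqSums0 (T + S)) := fun cb =>
    ⟨sec cb.1 + cb.2, add_mem_seqSums0 (hsec1 cb.1) cb.2.2⟩
  have hf : Function.Injective f := by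
    rintro ⟨c, b⟩ ⟨c', b'⟩ h
    simp only [f, Subtype.mk.injEq] at h
    have hcc : c = c' := by
      apply Subtype.ext
      have := congrArg π h
      rw [map_add, map_add, hsec2, hsec2] at this
      have hb0 : π (b : G) = 0 := by
        rw [hπ, QuotientAddGroup.mk'_apply, QuotientAddGroup.eq_zero_iff]
        exact hB _ b.2
      have hb0' : π (b' : G) = 0 := by
        rw [hπ, QuotientAddGroup.mk'_apply, QuotientAddGroup.eq_zero_iff]
        exact hB _ b'.2
      rwa [hb0, hb0', add_zero, add_zero] at this
    subst hcc
    have : (b : G) = b' := by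
      have := h
      exact add_left_cancel this
    exact Prod.ext rfl (Subtype.ext this)
  have hcard := Nat.card_le_card_of_injective f hf
  rw [Nat.card_prod] at hcard
  calc (Multiset.card T + 1) * Nat.card (seqSums0 S)
      ≤ Nat.card A * Nat.card (seqSums0 S) := Nat.mul_le_mul_right _ hkey
    _ ≤ Nat.card (seqSums0 (T + S)) := hcard
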